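/- Let n ≥ 1, let A, B ∈ M_n(ℂ), and let r be a real number with 1 ≤ r ≤ 2. Then det(|A+B|^r) ≤ det(I + |A|^r) · det(I + |B|^r), where all three matrices are positive semidefinite so the determinants are nonnegative real numbers. (Determinant form of the paper's Theorem 3.3.) -/

import Mathlib

open Matrix
open scoped ComplexOrder

/-- The `j`-th largest value (0-indexed) of a finite family of real numbers. -/
noncomputable def descSort {n : ℕ} (f : Fin n → ℝ) : Fin n → ℝ :=
  fun j => f (Tuple.sort f j.rev)

/-- The square root of a positive semidefinite matrix, as `PosSemidef.sqrt` was defined in the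
older Mathlib: `U * diagonal (√λ) * Uᴴ` for the eigenvector unitary `U` and eigenvalues `λ`. -/
noncomputable def psdSqrt {n : ℕ} {M : Matrix (Fin n) (Fin n) ℂ} (hM : M.PosSemidef) :
    Matrix (Fin n) (Fin n) ℂ :=
  hM.1.eigenvectorUnitary.1 * diagonal ((↑) ∘ (√·) ∘ hM.1.eigenvalues) *
    (star hM.1.eigenvectorUnitary : Matrix (Fin n) (Fin n) ℂ)

theorem psdSqrt_isHermitian {n : ℕ} {M : Matrix (Fin n) (Fin n) ℂ} (hM : M.PosSemidef) :
    (psdSqrt hM).IsHermitian := by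
  unfold psdSqrt
  apply Matrix.isHermitian_mul_mul_conjTranspose
  rw [Matrix.isHermitian_diagonal_iff]
  intro i
  simp [IsSelfAdjoint, Complex.conj_ofReal]

/-- The absolute value `|A| = (AᴴA)^{1/2}` of a complex matrix. -/
noncomputable def matAbs {n : ℕ} (A : Matrix (Fin n) (Fin n) ℂ) : Matrix (Fin n) (Fin n) ℂ :=
  psdSqrt (Matrix.posSemidef_conjTranspose_mul_self A)

/-- The singular values of `A`, in decreasing order, 0-indexed: `sv A 0 = s₁(A)` is the largest. -/
noncomputable def sv {n : ℕ} (A : Matrix (Fin n) (Fin n) ℂ) : Fin n → ℝ :=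
  descSort (psdSqrt_isHermitian (Matrix.posSemidef_conjTranspose_mul_self A)).eigenvalues

/-- The real power `A^r` of a (positive semidefinite) matrix, via continuous functional calculus. -/
noncomputable def rpowM {n : ℕ} (A : Matrix (Fin n) (Fin n) ℂ) (r : ℝ) :
    Matrix (Fin n) (Fin n) ℂ :=
  cfc (fun x : ℝ => x ^ r) A

/-- The top-`k` indices `j = 0, …, k-1` in `Fin n`. -/
def topIdx (n k : ℕ) : Finset (Fin n) := Finset.univ.filter (fun j : Fin n => (j : ℕ) < k)

/-- The bottom-`k` indices `j = n-k, …, n-1` in `Fin n`. -/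
def botIdx (n k : ℕ) : Finset (Fin n) := Finset.univ.filter (fun j : Fin n => n - k ≤ (j : ℕ))

/-!
For `r = 2` the inequality reads `det ((A+B)ᴴ(A+B)) ≤ det (1 + AᴴA) · det (1 + BᴴB)`: the block
matrix `W = [[1, -1], [A, B]]` has `det W = det (A + B)`, and `WᴴW` is positive semidefinite with
diagonal blocks `1 + AᴴA` and `1 + BᴴB`, so Fischer's inequality
`det [[P, Q], [Qᴴ, S]] ≤ det P · det S` applies. Since `|A|^r = (AᴴA)^(r/2)`, every determinant is
a product over eigenvalues, and the general case follows by raising the case `r = 2` to the power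
`p = r/2 ≤ 1` and using `(1 + μ)^p ≤ 1 + μ^p`.
-/

open scoped MatrixOrder

namespace Matrix

variable {m n 𝕜 : Type*} [RCLike 𝕜] [Fintype m] [DecidableEq m] [Fintype n] [DecidableEq n]

lemma IsHermitian.det_cfc {A : Matrix n n 𝕜} (hA : A.IsHermitian) (f : ℝ → ℝ) :
    (cfc f A).det = ∏ i, (f (hA.eigenvalues i) : 𝕜) := by
  simp [hA.cfc_eq, IsHermitian.cfc, -Unitary.conjStarAlgAut_apply, det_diagonal]

lemma one_add_cfc {A : Matrix n n 𝕜} (hA : A.IsHermitian) (f : ℝ → ℝ) :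
    1 + cfc f A = cfc (fun x => 1 + f x) A := by
  rw [cfc_const_add (1 : ℝ) f A (A.finite_real_spectrum.continuousOn f) hA.isSelfAdjoint, map_one]

lemma IsHermitian.det_one_add {A : Matrix n n 𝕜} (hA : A.IsHermitian) :
    (1 + A).det = ∏ i, ((1 + hA.eigenvalues i : ℝ) : 𝕜) := by
  conv_lhs => rw [← cfc_id' ℝ A]
  rw [one_add_cfc hA, hA.det_cfc]

lemma det_le_one_of_le_one {Z : Matrix n n 𝕜} (hZ0 : 0 ≤ Z) (hZ1 : Z ≤ 1) : Z.det ≤ 1 := by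
  have hZ : Z.PosSemidef := nonneg_iff_posSemidef.mp hZ0
  have heig (i : n) : hZ.1.eigenvalues i ≤ 1 :=
    (le_algebraMap_iff_spectrum_le hZ.1.isSelfAdjoint).mp (by rwa [map_one])
      _ (hZ.1.eigenvalues_mem_spectrum_real i)
  rw [hZ.1.det_eq_prod_eigenvalues, ← RCLike.ofReal_prod]
  exact_mod_cast Finset.prod_le_one (fun i _ => hZ.eigenvalues_nonneg i) (fun i _ => heig i)

lemma det_le_det_of_le {X Y : Matrix n n 𝕜} (hX : 0 ≤ X) (hXY : X ≤ Y) (hY : Y.PosDef) :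
    X.det ≤ Y.det := by
  set T := CFC.sqrt Y
  have hTT : T * T = Y := CFC.sqrt_mul_sqrt_self Y hY.posSemidef.nonneg
  have hT : IsUnit T.det := by
    have := hY.det_pos.ne'
    rw [← hTT, det_mul] at this
    exact isUnit_iff_ne_zero.mpr (left_ne_zero_of_mul this)
  have hTinv : IsSelfAdjoint T⁻¹ := (nonneg_iff_posSemidef.mp (CFC.sqrt_nonneg Y)).1.inv
  set Z := T⁻¹ * X * T⁻¹
  have hZ1 : Z ≤ 1 := calc
    Z ≤ T⁻¹ * Y * T⁻¹ := hTinv.conjugate_le_conjugate hXY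
    _ = 1 := by rw [← hTT, ← mul_assoc, nonsing_inv_mul _ hT, one_mul, mul_nonsing_inv _ hT]
  have hXZ : X = T * Z * T := by
    simp only [Z, ← mul_assoc, mul_nonsing_inv _ hT, one_mul]
    rw [mul_assoc, nonsing_inv_mul _ hT, mul_one]
  calc X.det = Z.det * Y.det := by rw [hXZ, ← hTT]; simp only [det_mul]; ring
    _ ≤ 1 * Y.det := mul_le_mul_of_nonneg_right
        (det_le_one_of_le_one (hTinv.conjugate_nonneg hX) hZ1) hY.det_pos.le
    _ = Y.det := one_mul _

theorem det_fromBlocks_le_mul {P : Matrix m m 𝕜} {S : Matrix n n 𝕜} (Q : Matrix m n 𝕜)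
    (hP : P.PosDef) (hS : S.PosDef) (hG : (fromBlocks P Q Qᴴ S).PosSemidef) :
    (fromBlocks P Q Qᴴ S).det ≤ P.det * S.det := by
  have := hP.isUnit.invertible
  have hSchur := (PosDef.fromBlocks₁₁ Q S hP).mp hG
  have hQPQ : 0 ≤ Qᴴ * P⁻¹ * Q := (hP.inv.posSemidef.conjTranspose_mul_mul_same Q).nonneg
  rw [det_fromBlocks₁₁, invOf_eq_nonsing_inv]
  exact mul_le_mul_of_nonneg_left (det_le_det_of_le hSchur.nonneg (sub_le_self _ hQPQ) hS)
    hP.det_pos.le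

theorem det_conjTranspose_mul_self_add_le (A B : Matrix n n 𝕜) :
    ((A + B)ᴴ * (A + B)).det ≤ (1 + Aᴴ * A).det * (1 + Bᴴ * B).det := by
  set W : Matrix (n ⊕ n) (n ⊕ n) 𝕜 := fromBlocks 1 (-1) A B
  have hW : W.det = (A + B).det := by
    rw [det_fromBlocks_one₁₁, Matrix.mul_neg, Matrix.mul_one, sub_neg_eq_add, add_comm]
  have hWW : Wᴴ * W = fromBlocks (1 + Aᴴ * A) (Aᴴ * B - 1) (Aᴴ * B - 1)ᴴ (1 + Bᴴ * B) := by
    simp [W, fromBlocks_conjTranspose, fromBlocks_multiply, conjTranspose_mul, sub_eq_add_neg,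
      add_comm]
  have hP := PosDef.one.add_posSemidef (posSemidef_conjTranspose_mul_self A)
  have hS := PosDef.one.add_posSemidef (posSemidef_conjTranspose_mul_self B)
  calc ((A + B)ᴴ * (A + B)).det = (Wᴴ * W).det := by
        rw [det_mul, det_mul, det_conjTranspose, det_conjTranspose, hW]
    _ ≤ _ := hWW ▸ det_fromBlocks_le_mul _ hP hS (hWW ▸ posSemidef_conjTranspose_mul_self W)

end Matrix

lemma Real.prod_one_add_rpow_le {ι : Type*} (s : Finset ι) {v : ι → ℝ} (hv : ∀ i ∈ s, 0 ≤ v i)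
    {p : ℝ} (hp0 : 0 ≤ p) (hp1 : p ≤ 1) :
    (∏ i ∈ s, (1 + v i)) ^ p ≤ ∏ i ∈ s, (1 + v i ^ p) := by
  rw [← Real.finsetProd_rpow s _ (fun i hi => by linarith [hv i hi])]
  refine Finset.prod_le_prod (fun i hi => Real.rpow_nonneg (by linarith [hv i hi]) p)
    fun i hi => ?_
  simpa using Real.rpow_add_le_add_rpow zero_le_one (hv i hi) hp0 hp1

lemma Real.prod_rpow_le_prod_one_add_rpow_mul {ι : Type*} (s : Finset ι) {u v w : ι → ℝ}
    (hu : ∀ i ∈ s, 0 ≤ u i) (hv : ∀ i ∈ s, 0 ≤ v i) (hw : ∀ i ∈ s, 0 ≤ w i) {p : ℝ}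
    (hp0 : 0 ≤ p) (hp1 : p ≤ 1) (h : ∏ i ∈ s, u i ≤ (∏ i ∈ s, (1 + v i)) * ∏ i ∈ s, (1 + w i)) :
    ∏ i ∈ s, u i ^ p ≤ (∏ i ∈ s, (1 + v i ^ p)) * ∏ i ∈ s, (1 + w i ^ p) := by
  have hv1 : 0 ≤ ∏ i ∈ s, (1 + v i) := Finset.prod_nonneg fun i hi => by linarith [hv i hi]
  have hw1 : 0 ≤ ∏ i ∈ s, (1 + w i) := Finset.prod_nonneg fun i hi => by linarith [hw i hi]
  calc ∏ i ∈ s, u i ^ p = (∏ i ∈ s, u i) ^ p := Real.finsetProd_rpow _ _ hu _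
    _ ≤ ((∏ i ∈ s, (1 + v i)) * ∏ i ∈ s, (1 + w i)) ^ p :=
        Real.rpow_le_rpow (Finset.prod_nonneg hu) h hp0
    _ = (∏ i ∈ s, (1 + v i)) ^ p * (∏ i ∈ s, (1 + w i)) ^ p := Real.mul_rpow hv1 hw1
    _ ≤ _ := mul_le_mul (Real.prod_one_add_rpow_le s hv hp0 hp1)
        (Real.prod_one_add_rpow_le s hw hp0 hp1) (Real.rpow_nonneg hw1 p)
        (Finset.prod_nonneg fun i hi => by linarith [Real.rpow_nonneg (hv i hi) p])

lemma psdSqrt_eq_cfc {n : ℕ} {M : Matrix (Fin n) (Fin n) ℂ} (hM : M.PosSemidef) :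
    psdSqrt hM = cfc Real.sqrt M := by
  rw [hM.1.cfc_eq]
  rfl

lemma rpowM_matAbs {n : ℕ} (A : Matrix (Fin n) (Fin n) ℂ) (r : ℝ) :
    rpowM (matAbs A) r = cfc (fun x : ℝ => x ^ (r / 2)) (Aᴴ * A) := by
  have hA := posSemidef_conjTranspose_mul_self A
  rw [rpowM, matAbs, psdSqrt_eq_cfc, ← cfc_comp' (fun x : ℝ => x ^ r) Real.sqrt (Aᴴ * A)
    (((Aᴴ * A).finite_real_spectrum.image _).continuousOn _) Real.continuous_sqrt.continuousOn
    hA.1.isSelfAdjoint]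
  refine cfc_congr fun x hx => ?_
  rw [Real.sqrt_eq_rpow,
    ← Real.rpow_mul (spectrum_nonneg_of_nonneg hA.nonneg hx)]
  ring_nf

theorem garg_aujla_det_general {n : ℕ}
    (A B : Matrix (Fin n) (Fin n) ℂ) (r : ℝ) (hr1 : 1 ≤ r) (hr2 : r ≤ 2) :
    (rpowM (matAbs (A + B)) r).det ≤
      (1 + rpowM (matAbs A) r).det * (1 + rpowM (matAbs B) r).det := by
  have hAB := posSemidef_conjTranspose_mul_self (A + B)
  have hA := posSemidef_conjTranspose_mul_self A
  have hB := posSemidef_conjTranspose_mul_self B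
  have key := Matrix.det_conjTranspose_mul_self_add_le A B
  rw [hAB.1.det_eq_prod_eigenvalues, hA.1.det_one_add, hB.1.det_one_add] at key
  rw [rpowM_matAbs, rpowM_matAbs, rpowM_matAbs, Matrix.one_add_cfc hA.1, Matrix.one_add_cfc hB.1,
    hAB.1.det_cfc, hA.1.det_cfc, hB.1.det_cfc]
  norm_cast at key ⊢
  exact Real.prod_rpow_le_prod_one_add_rpow_mul _ (fun i _ => hAB.eigenvalues_nonneg i)
    (fun i _ => hA.eigenvalues_nonneg i) (fun i _ => hB.eigenvalues_nonneg i) (by linarith)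
    (by linarith) key

/-- determinant form of Theorem 3.3.
For `1 ≤ r ≤ 2`, `det(|A+B|^r) ≤ det(I + |A|^r) · det(I + |B|^r)`
(all determinants are nonnegative reals; the inequality is in the complex order). -/
theorem garg_aujla_det {n : ℕ} (hn : 1 ≤ n)
    (A B : Matrix (Fin n) (Fin n) ℂ) (r : ℝ) (hr1 : 1 ≤ r) (hr2 : r ≤ 2) :
    (rpowM (matAbs (A + B)) r).det ≤
      (1 + rpowM (matAbs A) r).det * (1 + rpowM (matAbs B) r).det :=
  garg_aujla_det_general A B r hr1 hr2
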